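/- arXiv:2405.18264 — 4 statements merged into one kernel-verified Lean document; each statement's English description precedes it below -/
import Mathlib

section
/- Let G be a graph, I a maximum independent set of G of size m, K a set of vertices such that every independent set of G contains at most r vertices of K, and H a subset of I of size r + 1. If I' is a maximum independent set of G such that no vertex of I' is in H and no vertex of I' \ (I ∪ K) is adjacent to a vertex of H, then H ∪ (I' \ K) is an independent set of G of size at least m + 1 (a contradiction). Hence every maximum independent set either meets H or contains a vertex outside I ∪ K adjacent to some vertex of H, or contains a vertex of (I ∪ K) \ I adjacent to H. -/
/-- A finset of vertices is independent: no two of its members are adjacent. -/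
def IsIndepSet {V : Type*} (G : SimpleGraph V) (s : Finset V) : Prop :=
  ∀ a ∈ s, ∀ b ∈ s, ¬ G.Adj a b

/-- A maximum independent set: independent and of largest possible cardinality. -/
def IsMaxIndepSet {V : Type*} (G : SimpleGraph V) (s : Finset V) : Prop :=
  IsIndepSet G s ∧ ∀ t : Finset V, IsIndepSet G t → t.card ≤ s.card
/-- If I is a maximum independent set of size m, every independent set contains at most r
vertices of K, H ⊆ I has size r + 1, and I' is a maximum independent set disjoint from H
with no vertex of I' \ (I ∪ K) adjacent to a vertex of H, then H ∪ (I' \ K) is an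
independent set of size at least m + 1. -/
theorem stmt_4 {V : Type*} [Fintype V] [DecidableEq V] (G : SimpleGraph V)
    (I K H I' : Finset V) (m r : ℕ)
    (hI : IsMaxIndepSet G I) (hm : I.card = m)
    (hK : ∀ J : Finset V, IsIndepSet G J → (J ∩ K).card ≤ r)
    (hHI : H ⊆ I) (hH : H.card = r + 1)
    (hI' : IsMaxIndepSet G I')
    (hdisj : ∀ w ∈ I', w ∉ H)
    (hnoadj : ∀ w ∈ I', w ∉ I → w ∉ K → ∀ v ∈ H, ¬ G.Adj v w) :
    IsIndepSet G (H ∪ (I' \ K)) ∧ m + 1 ≤ (H ∪ (I' \ K)).card := by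
  have cross : ∀ v ∈ H, ∀ w ∈ I' \ K, ¬ G.Adj v w := by
    intro v hv w hw hadj
    rcases Finset.mem_sdiff.mp hw with ⟨hwI', hwK⟩
    by_cases hwI : w ∈ I
    · exact hI.1 v (hHI hv) w hwI hadj
    · exact hnoadj w hwI' hwI hwK v hv hadj
  constructor
  · intro a ha b hb hadj
    rcases Finset.mem_union.mp ha with ha | ha <;>
      rcases Finset.mem_union.mp hb with hb | hb
    · exact hI.1 a (hHI ha) b (hHI hb) hadj
    · exact cross a ha b hb hadj
    · exact cross b hb a ha hadj.symm
    · exact hI'.1 a (Finset.mem_sdiff.mp ha).1 b (Finset.mem_sdiff.mp hb).1 hadj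
  · have hdisj' : Disjoint H (I' \ K) := by
      rw [Finset.disjoint_left]
      intro a ha ha'
      exact hdisj a (Finset.mem_sdiff.mp ha').1 ha
    rw [Finset.card_union_of_disjoint hdisj']
    have h1 : (I' \ K).card = I'.card - (I' ∩ K).card := by
      rw [← Finset.sdiff_inter_self_left]
      exact Finset.card_sdiff_of_subset (Finset.inter_subset_left)
    have h2 : (I' ∩ K).card ≤ r := hK I' hI'.1
    have h3 : m ≤ I'.card := hm ▸ hI'.2 I hI.1
    have h4 : (I' ∩ K).card ≤ I'.card := Finset.card_le_card Finset.inter_subset_left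
    omega
end

section
/- Let F be a finite family of subsets of a finite set V, and let p be a positive integer such that |F| · (1 − p/|V|)^k < 1, where every member of F has size at least k ≥ 1. Then there exists a set T ⊆ V with |T| ≤ p such that T ∩ S ≠ ∅ for every S ∈ F. -/
/-!
A uniformly random `p`-subset of an `n`-set misses a fixed set `S` with probability
`C(n - |S|, p) / C(n, p) ≤ (1 - p/n)^|S| ≤ (1 - p/n)^k`; each factor `C(m, p) / C(m + 1, p)`
of this ratio is `(m + 1 - p) / (m + 1) ≤ (n - p) / n`. By the union bound the expected number
of members of `F` missed is below `1`, so some `p`-subset meets all of them.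
When `p ≥ n`, `V` itself works.
-/

open Finset

namespace Nat

theorem choose_mul_le_choose_succ_mul_sub {m n : ℕ} (p : ℕ) (hmn : m + 1 ≤ n) :
    m.choose p * n ≤ (m + 1).choose p * (n - p) := by
  rcases lt_or_ge m p with hmp | hpm
  · simp [Nat.choose_eq_zero_of_lt hmp]
  have hstep := Nat.choose_mul_succ_eq m p
  have hratio : (m + 1 - p) * n ≤ (n - p) * (m + 1) := by
    rw [Nat.sub_mul, Nat.sub_mul, Nat.mul_comm n]
    exact Nat.sub_le_sub_left (Nat.mul_le_mul_left p hmn) _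
  refine Nat.le_of_mul_le_mul_right ?_ m.succ_pos
  calc m.choose p * n * (m + 1) = (m + 1).choose p * ((m + 1 - p) * n) := by
        rw [mul_right_comm, hstep, mul_assoc]
    _ ≤ (m + 1).choose p * ((n - p) * (m + 1)) := Nat.mul_le_mul_left _ hratio
    _ = (m + 1).choose p * (n - p) * (m + 1) := by rw [mul_assoc]

theorem choose_mul_pow_le_choose_add_mul_pow {m s n : ℕ} (p : ℕ) (hmsn : m + s ≤ n) :
    m.choose p * n ^ s ≤ (m + s).choose p * (n - p) ^ s := by
  induction s with
  | zero => simp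
  | succ s ih =>
    calc m.choose p * n ^ (s + 1) = m.choose p * n ^ s * n := by rw [pow_succ, mul_assoc]
      _ ≤ (m + s).choose p * (n - p) ^ s * n := Nat.mul_le_mul_right _ (ih (by omega))
      _ = (m + s).choose p * n * (n - p) ^ s := by ring
      _ ≤ (m + s + 1).choose p * (n - p) * (n - p) ^ s :=
          Nat.mul_le_mul_right _ (choose_mul_le_choose_succ_mul_sub p (by omega))
      _ = (m + (s + 1)).choose p * (n - p) ^ (s + 1) := by rw [← add_assoc]; ring

theorem choose_sub_le_choose_mul_one_sub_div_pow {n s p : ℕ} (hsn : s ≤ n) (hpn : p ≤ n) :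
    ((n - s).choose p : ℝ) ≤ n.choose p * (1 - (p : ℝ) / n) ^ s := by
  rcases (Nat.zero_le n).eq_or_lt with rfl | hn
  · simp_all
  have hnR : (0 : ℝ) < n := by exact_mod_cast hn
  have key := choose_mul_pow_le_choose_add_mul_pow (m := n - s) p (Nat.sub_add_cancel hsn).le
  rw [Nat.sub_add_cancel hsn] at key
  rw [one_sub_div hnR.ne', div_pow, ← mul_div_assoc, le_div_iff₀ (by positivity)]
  exact_mod_cast key

end Nat

namespace Finset

variable {α : Type*} [Fintype α] [DecidableEq α]

theorem filter_disjoint_powersetCard_univ (S : Finset α) (p : ℕ) :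
    {T ∈ powersetCard p (univ : Finset α) | Disjoint S T} = powersetCard p Sᶜ := by
  ext T
  simp [mem_powersetCard, subset_compl_iff_disjoint_left, and_comm]

theorem exists_card_eq_forall_inter_nonempty {F : Finset (Finset α)} {p : ℕ}
    (h : ∑ S ∈ F, (Fintype.card α - #S).choose p < (Fintype.card α).choose p) :
    ∃ T : Finset α, #T = p ∧ ∀ S ∈ F, (S ∩ T).Nonempty := by
  set missed := F.biUnion fun S => {T ∈ powersetCard p univ | Disjoint S T}
  have hmissed : #missed < #(powersetCard p (univ : Finset α)) := by
    refine card_biUnion_le.trans_lt ?_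
    simpa [filter_disjoint_powersetCard_univ, card_compl] using h
  obtain ⟨T, hT, hTmissed⟩ := exists_mem_notMem_of_card_lt_card hmissed
  refine ⟨T, (mem_powersetCard.1 hT).2, fun S hS => not_disjoint_iff_nonempty_inter.1 fun hST => ?_⟩
  exact hTmissed (mem_biUnion.2 ⟨S, hS, mem_filter.2 ⟨hT, hST⟩⟩)

end Finset

theorem stmt_11_general {V : Type*} [Fintype V] [DecidableEq V]
    (F : Finset (Finset V)) (k p : ℕ) (hk : 1 ≤ k)
    (hsize : ∀ S ∈ F, k ≤ S.card)
    (hprob : (F.card : ℝ) * (1 - (p : ℝ) / (Fintype.card V)) ^ k < 1) :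
    ∃ T : Finset V, T.card ≤ p ∧ ∀ S ∈ F, (S ∩ T).Nonempty := by
  set n := Fintype.card V
  rcases le_or_gt n p with hnp | hpn
  · refine ⟨univ, by simpa using hnp, fun S hS => ?_⟩
    simpa using card_pos.1 (hk.trans (hsize S hS))
  suffices hsum : ∑ S ∈ F, (n - #S).choose p < n.choose p by
    obtain ⟨T, hT, hhit⟩ := exists_card_eq_forall_inter_nonempty hsum
    exact ⟨T, hT.le, hhit⟩
  have hn : (0 : ℝ) < n := by exact_mod_cast (Nat.zero_le p).trans_lt hpn
  have hdiv : (p : ℝ) / n ≤ 1 := (div_le_one hn).2 (by exact_mod_cast hpn.le)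
  have hchoose : (0 : ℝ) < n.choose p := by exact_mod_cast Nat.choose_pos hpn.le
  have hq : 0 ≤ 1 - (p : ℝ) / n ∧ 1 - (p : ℝ) / n ≤ 1 :=
    ⟨by linarith, by linarith [div_nonneg p.cast_nonneg hn.le]⟩
  have hterm : ∀ S ∈ F, ((n - #S).choose p : ℝ) ≤ n.choose p * (1 - (p : ℝ) / n) ^ k :=
    fun S hS => (Nat.choose_sub_le_choose_mul_one_sub_div_pow (card_le_univ S) hpn.le).trans <|
      mul_le_mul_of_nonneg_left (pow_le_pow_of_le_one hq.1 hq.2 (hsize S hS)) hchoose.le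
  have : (∑ S ∈ F, ((n - #S).choose p : ℝ)) < n.choose p :=
    calc ∑ S ∈ F, ((n - #S).choose p : ℝ) ≤ #F * (n.choose p * (1 - (p : ℝ) / n) ^ k) := by
          simpa using sum_le_sum hterm
      _ = #F * (1 - (p : ℝ) / n) ^ k * n.choose p := by ring
      _ < n.choose p := mul_lt_of_lt_one_left hchoose hprob
  exact_mod_cast this

/-- Probabilistic-method transversal bound: if every member of a finite family F of
subsets of V has size at least k ≥ 1 and |F| · (1 - p/|V|)^k < 1, then there is a set
of at most p elements meeting every member of F. -/
theorem stmt_11 {V : Type*} [Fintype V] [DecidableEq V] [Nonempty V]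
    (F : Finset (Finset V)) (k p : ℕ) (hk : 1 ≤ k)
    (hsize : ∀ S ∈ F, k ≤ S.card)
    (hprob : (F.card : ℝ) * (1 - (p : ℝ) / (Fintype.card V)) ^ k < 1) :
    ∃ T : Finset V, T.card ≤ p ∧ ∀ S ∈ F, (S ∩ T).Nonempty :=
  stmt_11_general F k p hk hsize hprob
end

section
/- Let G be an n-vertex graph with no induced matching of size 2 (i.e., G contains no four distinct vertices a, b, c, d such that ab and cd are edges and there are no other edges among {a,b,c,d}). Then the number of maximal independent sets of G is at most n^2. -/
/-- G contains no induced matching of size 2 (no induced 2K₂). -/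
def InducedM2Free {V : Type*} (G : SimpleGraph V) : Prop :=
  ¬ ∃ a b c d : V, a ≠ b ∧ a ≠ c ∧ a ≠ d ∧ b ≠ c ∧ b ≠ d ∧ c ≠ d ∧
      G.Adj a b ∧ G.Adj c d ∧ ¬ G.Adj a c ∧ ¬ G.Adj a d ∧ ¬ G.Adj b c ∧ ¬ G.Adj b d

/-- A maximal independent set: independent and not properly contained in another. -/
def IsMaximalIndepSet {V : Type*} (G : SimpleGraph V) (s : Finset V) : Prop :=
  IsIndepSet G s ∧ ∀ t : Finset V, IsIndepSet G t → s ⊆ t → t = s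

/-!
Fix a vertex `v` of a vertex set `A`. A maximal independent subset `s` of `A` whose trace
`s \ {v}` is maximal in `A \ {v}` is recovered from that trace, so there are at most as many
of these as there are maximal independent subsets of `A \ {v}`. Otherwise `v ∈ s` and some
`u ∈ A \ {v}` extends `s \ {v}`; then `u` is adjacent to `v`, and since there is no induced
`2K₂` the common non-neighbours of `u` and `v` together with `v` form an independent set, which
by maximality is `s`. So each further set is determined by a vertex `u ∈ A \ {v}`, and by
induction on `|A|` there are at most `1 + (|A| choose 2) ≤ |A|²` maximal independent subsets of a
nonempty `A`.
-/

open Finset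

lemma Nat.succ_choose_two (n : ℕ) : (n + 1).choose 2 = n + n.choose 2 := by
  rw [Nat.choose_succ_succ', Nat.choose_one_right]

lemma Nat.one_add_choose_two_le_sq {n : ℕ} (hn : 0 < n) : 1 + n.choose 2 ≤ n ^ 2 := by
  obtain ⟨m, rfl⟩ := Nat.exists_eq_add_one_of_ne_zero hn.ne'
  rw [Nat.succ_choose_two]
  nlinarith [Nat.choose_le_pow m 2]

section

variable {V : Type*} {G : SimpleGraph V}

lemma IsIndepSet.mono {s t : Finset V} (hts : t ⊆ s) (hs : IsIndepSet G s) : IsIndepSet G t :=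
  fun a ha b hb => hs a (hts ha) b (hts hb)

lemma isIndepSet_insert [DecidableEq V] {s : Finset V} {u : V} :
    IsIndepSet G (insert u s) ↔ IsIndepSet G s ∧ ∀ w ∈ s, ¬G.Adj u w := by
  refine ⟨fun h => ⟨h.mono (subset_insert u s),
    fun w hw => h u (mem_insert_self u s) w (mem_insert_of_mem hw)⟩, ?_⟩
  rintro ⟨hs, hu⟩ a ha b hb
  rcases mem_insert.mp ha with rfl | has <;> rcases mem_insert.mp hb with rfl | hbs
  · exact G.loopless.irrefl _
  · exact hu b hbs
  · exact fun hab => hu a has hab.symm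
  · exact hs a has b hbs

variable (G) in
def IsMaximalIndepSetIn (A s : Finset V) : Prop :=
  s ⊆ A ∧ IsIndepSet G s ∧ ∀ t : Finset V, t ⊆ A → IsIndepSet G t → s ⊆ t → t = s

variable (G) in
open Classical in
noncomputable def maximalIndepSetsIn (A : Finset V) : Finset (Finset V) :=
  A.powerset.filter (IsMaximalIndepSetIn G A)

@[simp]
lemma mem_maximalIndepSetsIn {A s : Finset V} :
    s ∈ maximalIndepSetsIn G A ↔ IsMaximalIndepSetIn G A s := by
  classical
  simp only [maximalIndepSetsIn, mem_filter, mem_powerset, and_iff_right_iff_imp]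
  exact And.left

lemma isMaximalIndepSetIn_univ_iff [Fintype V] {s : Finset V} :
    IsMaximalIndepSetIn G univ s ↔ IsMaximalIndepSet G s :=
  ⟨fun h => ⟨h.2.1, fun t ht hst => h.2.2 t (subset_univ t) ht hst⟩,
    fun h => ⟨subset_univ s, h.1, fun t _ ht hst => h.2 t ht hst⟩⟩

namespace IsMaximalIndepSetIn

variable {A B s t : Finset V}

lemma of_subset (h : IsMaximalIndepSetIn G A s) (hsB : s ⊆ B) (hBA : B ⊆ A) :
    IsMaximalIndepSetIn G B s :=
  ⟨hsB, h.2.1, fun t htB => h.2.2 t (htB.trans hBA)⟩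

lemma eq_of_subset (hs : IsMaximalIndepSetIn G A s) (ht : IsMaximalIndepSetIn G A t)
    (hst : s ⊆ t) : s = t :=
  (hs.2.2 t ht.1 ht.2.1 hst).symm

lemma mem_of_erase_eq [DecidableEq V] {v : V} (hs : IsMaximalIndepSetIn G A s)
    (ht : IsMaximalIndepSetIn G A t) (hst : s.erase v = t.erase v) (hv : v ∈ s) : v ∈ t := by
  by_contra hvt
  have hts : t ⊆ s := by
    rw [← erase_eq_of_notMem hvt, ← hst]
    exact erase_subset v s
  exact hvt (ht.eq_of_subset hs hts ▸ hv)

lemma eq_of_erase_eq [DecidableEq V] {v : V} (hs : IsMaximalIndepSetIn G A s)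
    (ht : IsMaximalIndepSetIn G A t) (hst : s.erase v = t.erase v) : s = t := by
  ext x
  by_cases hxv : x = v
  · subst hxv
    exact ⟨hs.mem_of_erase_eq ht hst, ht.mem_of_erase_eq hs hst.symm⟩
  · simpa [hxv] using Finset.ext_iff.mp hst x

end IsMaximalIndepSetIn

lemma exists_insert_of_not_isMaximalIndepSetIn [DecidableEq V] {A s : Finset V} (hsA : s ⊆ A)
    (hs : IsIndepSet G s) (hmax : ¬IsMaximalIndepSetIn G A s) :
    ∃ u ∈ A, u ∉ s ∧ IsIndepSet G (insert u s) := by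
  simp only [IsMaximalIndepSetIn, hsA, hs, true_and, not_forall] at hmax
  obtain ⟨t, htA, ht, hst, hne⟩ := hmax
  obtain ⟨u, hut, hus⟩ := exists_of_ssubset (ssubset_of_subset_of_ne hst (Ne.symm hne))
  exact ⟨u, htA hut, hus, ht.mono (insert_subset hut hst)⟩

variable (G) in
open Classical in
noncomputable def commonNonNbrs (A : Finset V) (u v : V) : Finset V :=
  A.filter fun w => ¬G.Adj w u ∧ ¬G.Adj w v

lemma mem_commonNonNbrs {A : Finset V} {u v w : V} :
    w ∈ commonNonNbrs G A u v ↔ w ∈ A ∧ ¬G.Adj w u ∧ ¬G.Adj w v := by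
  classical
  simp only [commonNonNbrs, mem_filter]

lemma InducedM2Free.isIndepSet_insert_commonNonNbrs [DecidableEq V] (hG : InducedM2Free G)
    {u v : V} (huv : G.Adj u v) (A : Finset V) :
    IsIndepSet G (insert v (commonNonNbrs G A u v)) := by
  refine isIndepSet_insert.mpr ⟨?_, fun w hw hvw => (mem_commonNonNbrs.mp hw).2.2 hvw.symm⟩
  intro a ha b hb hab
  obtain ⟨-, hau, hav⟩ := mem_commonNonNbrs.mp ha
  obtain ⟨-, hbu, hbv⟩ := mem_commonNonNbrs.mp hb
  exact hG ⟨u, v, a, b, huv.ne, fun h => hav (h ▸ huv), fun h => hbv (h ▸ huv),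
    fun h => hau (h ▸ huv.symm), fun h => hbu (h ▸ huv.symm), hab.ne, huv, hab,
    fun h => hau h.symm, fun h => hbu h.symm, fun h => hav h.symm, fun h => hbv h.symm⟩

lemma IsMaximalIndepSetIn.eq_insert_commonNonNbrs [DecidableEq V] (hG : InducedM2Free G)
    {A s : Finset V} {u v : V} (hs : IsMaximalIndepSetIn G A s) (hv : v ∈ s) (huA : u ∈ A)
    (hus : u ∉ s) (hu : IsIndepSet G (insert u (s.erase v))) :
    s = insert v (commonNonNbrs G A u v) := by
  have hu_nadj : ∀ w ∈ s, w ≠ v → ¬G.Adj u w := fun w hw hwv =>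
    (isIndepSet_insert.mp hu).2 w (mem_erase.mpr ⟨hwv, hw⟩)
  have huv : G.Adj u v := by
    by_contra huv
    have hins : IsIndepSet G (insert u s) := isIndepSet_insert.mpr ⟨hs.2.1, fun w hw => by
      by_cases hwv : w = v
      · exact hwv ▸ huv
      · exact hu_nadj w hw hwv⟩
    exact hus (hs.2.2 _ (insert_subset huA hs.1) hins (subset_insert u s) ▸ mem_insert_self u s)
  have hsub : s ⊆ insert v (commonNonNbrs G A u v) := fun w hw => by
    by_cases hwv : w = v
    · rw [hwv]
      exact mem_insert_self v _
    · exact mem_insert_of_mem (mem_commonNonNbrs.mpr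
        ⟨hs.1 hw, fun h => hu_nadj w hw hwv h.symm, hs.2.1 w hw v hv⟩)
  have hsubA : insert v (commonNonNbrs G A u v) ⊆ A :=
    insert_subset (hs.1 hv) fun w hw => (mem_commonNonNbrs.mp hw).1
  exact (hs.2.2 _ hsubA (hG.isIndepSet_insert_commonNonNbrs huv A) hsub).symm

lemma card_maximalIndepSetsIn_le_card_erase_add [DecidableEq V] (hG : InducedM2Free G)
    (A : Finset V) (v : V) :
    #(maximalIndepSetsIn G A) ≤ #(maximalIndepSetsIn G (A.erase v)) + #(A.erase v) := by
  set M := maximalIndepSetsIn G A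
  set M' := maximalIndepSetsIn G (A.erase v)
  have hrestrict : #(M.filter fun s => s.erase v ∈ M') ≤ #M' :=
    card_le_card_of_injOn (·.erase v) (fun s hs => (mem_filter.mp hs).2)
      fun s hs t ht hst => (mem_maximalIndepSetsIn.mp (mem_filter.mp hs).1).eq_of_erase_eq
        (mem_maximalIndepSetsIn.mp (mem_filter.mp ht).1) hst
  have hextend : M.filter (fun s => s.erase v ∉ M') ⊆
      (A.erase v).image fun u => insert v (commonNonNbrs G A u v) := by
    intro s hs
    obtain ⟨hsM, hsM'⟩ := mem_filter.mp hs
    have hsA := mem_maximalIndepSetsIn.mp hsM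
    have hvs : v ∈ s := by
      by_contra hvs
      rw [erase_eq_of_notMem hvs] at hsM'
      exact hsM' (mem_maximalIndepSetsIn.mpr
        (hsA.of_subset (subset_erase.mpr ⟨hsA.1, hvs⟩) (erase_subset v A)))
    obtain ⟨u, huA, hus, hu⟩ := exists_insert_of_not_isMaximalIndepSetIn
      (erase_subset_erase v hsA.1) (hsA.2.1.mono (erase_subset v s))
      fun h => hsM' (mem_maximalIndepSetsIn.mpr h)
    have hus' : u ∉ s := fun h => hus (mem_erase.mpr ⟨ne_of_mem_erase huA, h⟩)
    exact mem_image.mpr ⟨u, huA,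
      (hsA.eq_insert_commonNonNbrs hG hvs (mem_of_mem_erase huA) hus' hu).symm⟩
  calc #M = #(M.filter fun s => s.erase v ∈ M') + #(M.filter fun s => s.erase v ∉ M') :=
        (card_filter_add_card_filter_not _).symm
    _ ≤ #M' + #(A.erase v) := add_le_add hrestrict ((card_le_card hextend).trans card_image_le)

lemma card_maximalIndepSetsIn_le [DecidableEq V] (hG : InducedM2Free G) (A : Finset V) :
    #(maximalIndepSetsIn G A) ≤ 1 + (#A).choose 2 := by
  induction A using Finset.induction_on with
  | empty =>
    refine card_le_one.mpr fun s hs t ht => ?_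
    rw [subset_empty.mp (mem_maximalIndepSetsIn.mp hs).1,
      subset_empty.mp (mem_maximalIndepSetsIn.mp ht).1]
  | insert v B hvB ih =>
    have hstep := card_maximalIndepSetsIn_le_card_erase_add hG (insert v B) v
    rw [erase_insert hvB] at hstep
    rw [card_insert_of_notMem hvB, Nat.succ_choose_two]
    omega

end

/-- A graph on n ≥ 1 vertices with no induced matching of size 2 has at most n²
maximal independent sets. -/
theorem stmt_12 {V : Type*} [Fintype V] [DecidableEq V] [Nonempty V] (G : SimpleGraph V)
    (hG : InducedM2Free G) :
    {s : Finset V | IsMaximalIndepSet G s}.ncard ≤ (Fintype.card V) ^ 2 := by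
  have hMIS : {s : Finset V | IsMaximalIndepSet G s} = maximalIndepSetsIn G univ := by
    ext s
    simp [isMaximalIndepSetIn_univ_iff]
  rw [hMIS, Set.ncard_coe_finset]
  calc #(maximalIndepSetsIn G univ) ≤ 1 + (Fintype.card V).choose 2 :=
        card_maximalIndepSetsIn_le hG univ
    _ ≤ Fintype.card V ^ 2 := Nat.one_add_choose_two_le_sq Fintype.card_pos
end

section
/- Let G be an n-vertex graph with no induced matching of size 2, let v be a vertex of G, and let I be a maximal independent set of G containing v. Suppose I \ {v} is not a maximal independent set of G − v, i.e., there is a vertex u adjacent to v but to no vertex of I \ {v}. Then I \ {v} equals exactly the set of common non-neighbors of u and v, i.e., I \ {v} = {w ∈ V(G) \ {u, v} : w is adjacent to neither u nor v}. -/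
/-- In an induced-2K₂-free graph, if I is a maximal independent set containing v and u is
a vertex adjacent to v but to no vertex of I \ {v}, then I \ {v} is exactly the set of
common non-neighbors of u and v (other than u and v themselves). -/
theorem stmt_13 {V : Type*} [Fintype V] [DecidableEq V] (G : SimpleGraph V)
    (hG : InducedM2Free G) (I : Finset V) (hI : IsMaximalIndepSet G I)
    (v : V) (hv : v ∈ I) (u : V) (huv : G.Adj u v)
    (hu : ∀ w ∈ I.erase v, ¬ G.Adj u w) :
    (↑(I.erase v) : Set V) =
      {w : V | w ≠ u ∧ w ≠ v ∧ ¬ G.Adj u w ∧ ¬ G.Adj v w} := by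
  obtain ⟨hind, hmax⟩ := hI
  have hunotI : u ∉ I := fun h => hind u h v hv huv
  ext w
  simp only [Finset.coe_erase, Set.mem_diff, Finset.mem_coe, Set.mem_singleton_iff,
    Set.mem_setOf_eq]
  constructor
  · rintro ⟨hwI, hwv⟩
    have hwe : w ∈ I.erase v := Finset.mem_erase.mpr ⟨hwv, hwI⟩
    exact ⟨fun h => hunotI (h ▸ hwI), hwv, hu w hwe, hind v hv w hwI⟩
  · rintro ⟨hwu, hwv, hnuw, hnvw⟩
    by_contra hcon
    have hwI : w ∉ I := by
      intro h
      exact hcon ⟨h, hwv⟩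
    -- insert w I is not independent, so there is w' ∈ I adjacent to w
    have : ¬ IsIndepSet G (insert w I) := by
      intro hind'
      have := hmax (insert w I) hind' (Finset.subset_insert w I)
      exact hwI (this ▸ Finset.mem_insert_self w I)
    have : ∃ w' ∈ I, G.Adj w w' := by
      by_contra hno
      push_neg at hno
      apply this
      intro a ha b hb hab
      rcases Finset.mem_insert.mp ha with ha' | ha <;>
        rcases Finset.mem_insert.mp hb with hb' | hb
      · rw [ha', hb'] at hab; exact G.loopless.irrefl w hab
      · rw [ha'] at hab; exact hno b hb hab
      · rw [hb'] at hab; exact hno a ha hab.symm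
      · exact hind a ha b hb hab
    obtain ⟨w', hw'I, haww'⟩ := this
    have hw'v : w' ≠ v := fun h => hnvw (h ▸ haww').symm
    have hw'e : w' ∈ I.erase v := Finset.mem_erase.mpr ⟨hw'v, hw'I⟩
    apply hG
    exact ⟨u, v, w, w', huv.ne, Ne.symm hwu, fun h => hunotI (h ▸ hw'I),
      Ne.symm hwv, Ne.symm hw'v, haww'.ne, huv, haww', hnuw, hu w' hw'e, hnvw,
      hind v hv w' hw'I⟩
end
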